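/- Let n, m be positive integers with m even, and let c : [m]^n → ℝ^{2n} satisfy: for every pair of voxels i, j adjacent in coordinate t, (c_i)_{ξ(i,j,t)} + (c_j)_{ξ(i,j,t)} = 0, where ξ(i,j,t) = 2t - (i_t mod 2) (with j_t = i_t + 1). Then the sum of (c_i)_k over all pairs (i,k) ∈ [m]^n × [2n] equals the sum of (c_i)_{2t} over all i ∈ [m]^n and t ∈ [n] with i_t ∈ {1, m}. -/
import Mathlib


/-- Voxels `i, j ∈ [m]^n` (0-based: values `0..m-1` representing `1..m`) are adjacent
in coordinate `t` if `j_t = i_t + 1` and they agree elsewhere. -/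
def adjacentVox {n m : ℕ} (i j : Fin n → Fin m) (t : Fin n) : Prop :=
  ((j t : ℕ) = (i t : ℕ) + 1) ∧ ∀ s : Fin n, s ≠ t → j s = i s

/-- `ξ(i,j,t) = 2t - (i_t mod 2)` (1-based), rendered 0-based as `2t + (i_t mod 2)`
where here `i t : Fin m` is the 0-based coordinate (1-based value is `(i t) + 1`). -/
def xiIdx {n m : ℕ} (i : Fin n → Fin m) (t : Fin n) : Fin (2 * n) :=
  ⟨2 * t.1 + (i t).1 % 2, by have := t.isLt; omega⟩

private lemma adj_update {n m : ℕ} (i : Fin n → Fin m) (t : Fin n)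
    (h : (i t).1 + 1 < m) :
    adjacentVox i (Function.update i t ⟨(i t).1 + 1, h⟩) t := by
  refine ⟨by simp, fun s hs => Function.update_of_ne hs _ _⟩

private lemma sum_range_two_mul (N : ℕ) (f : ℕ → ℝ) :
    ∑ k ∈ Finset.range (2 * N), f k
      = ∑ t ∈ Finset.range N, (f (2 * t) + f (2 * t + 1)) := by
  induction N with
  | zero => simp
  | succ N ih =>
    have h2 : 2 * (N + 1) = (2 * N + 1) + 1 := by ring
    rw [h2, Finset.sum_range_succ, Finset.sum_range_succ, ih, Finset.sum_range_succ]
    ring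

private lemma fin_sum_pairs (N : ℕ) (f : Fin (2 * N) → ℝ) :
    ∑ k : Fin (2 * N), f k
      = ∑ t : Fin N, (f ⟨2 * t.1, by have := t.isLt; omega⟩
          + f ⟨2 * t.1 + 1, by have := t.isLt; omega⟩) := by
  set F : ℕ → ℝ := fun k => if h : k < 2 * N then f ⟨k, h⟩ else 0 with hF
  have h1 : ∑ k : Fin (2 * N), f k = ∑ k ∈ Finset.range (2 * N), F k := by
    rw [← Fin.sum_univ_eq_sum_range]
    exact Finset.sum_congr rfl fun k _ => by simp [hF, k.isLt]
  rw [h1, sum_range_two_mul, ← Fin.sum_univ_eq_sum_range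
    (fun t => F (2 * t) + F (2 * t + 1)) N]
  refine Finset.sum_congr rfl fun t _ => ?_
  have ht := t.isLt
  simp only [hF]
  rw [dif_pos (by omega), dif_pos (by omega)]

theorem stmt3 (n m : ℕ) (hn : 0 < n) (hm : 0 < m) (hme : Even m)
    (c : (Fin n → Fin m) → Fin (2 * n) → ℝ)
    (h1 : ∀ (i j : Fin n → Fin m) (t : Fin n), adjacentVox i j t →
      c i (xiIdx i t) + c j (xiIdx i t) = 0) :
    ∑ i : Fin n → Fin m, ∑ k : Fin (2*n), c i k =
      ∑ i : Fin n → Fin m, ∑ t : Fin n,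
        if (i t).1 + 1 = 1 ∨ (i t).1 + 1 = m then
          c i ⟨2 * t.1 + 1, by have := t.isLt; omega⟩ else 0 := by
  classical
  obtain ⟨m2, hm2⟩ := hme
  -- pairing equation, packaged with a flexible index
  have key : ∀ (i : Fin n → Fin m) (t : Fin n) (h : (i t).1 + 1 < m)
      (k : Fin (2 * n)), (k : ℕ) = 2 * t.1 + (i t).1 % 2 →
      c i k + c (Function.update i t ⟨(i t).1 + 1, h⟩) k = 0 := by
    intro i t h k hk
    have hke : k = xiIdx i t := Fin.ext hk
    rw [hke]
    exact h1 i _ t (adj_update i t h)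
  -- the even-index sums vanish
  have even_sum : ∀ t : Fin n,
      ∑ i : Fin n → Fin m, c i ⟨2 * t.1, by have := t.isLt; omega⟩ = 0 := by
    intro t
    set e : Fin (2 * n) := ⟨2 * t.1, by have := t.isLt; omega⟩ with he
    have flipmem : ∀ i : Fin n → Fin m,
        (if (i t).1 % 2 = 0 then (i t).1 + 1 else (i t).1 - 1) < m := by
      intro i
      have := (i t).isLt
      by_cases h : (i t).1 % 2 = 0 <;> simp [h] <;> omega
    set g : (Fin n → Fin m) → (Fin n → Fin m) := fun i =>
      Function.update i t ⟨_, flipmem i⟩ with hg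
    have gvt : ∀ i, ((g i) t).1
        = if (i t).1 % 2 = 0 then (i t).1 + 1 else (i t).1 - 1 := by
      intro i; simp [hg]
    have gvs : ∀ i s, s ≠ t → g i s = i s := by
      intro i s hs; simp [hg, Function.update_of_ne hs]
    refine Finset.sum_ninvolution g ?_ ?_ (fun _ => Finset.mem_univ _) ?_
    · intro i
      by_cases hpar : (i t).1 % 2 = 0
      · have hlt : (i t).1 + 1 < m := by have := (i t).isLt; omega
        have hk := key i t hlt e (by simp [he, hpar])
        have hgi : Function.update i t ⟨(i t).1 + 1, hlt⟩ = g i := by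
          funext s
          by_cases hs : s = t
          · subst hs
            apply Fin.ext
            simp only [Function.update_self]
            rw [gvt i, if_pos hpar]
          · rw [gvs i s hs, Function.update_of_ne hs]
        rw [hgi] at hk
        exact hk
      · -- i t is odd; g i has even coordinate, and updating it back gives i
        have h0 : 0 < (i t).1 := by omega
        have hgval : ((g i) t).1 = (i t).1 - 1 := by rw [gvt i, if_neg hpar]
        have hgpar : ((g i) t).1 % 2 = 0 := by rw [hgval]; omega
        have hlt : ((g i) t).1 + 1 < m := by
          rw [hgval]; have := (i t).isLt; omega
        have hiback : Function.update (g i) t ⟨((g i) t).1 + 1, hlt⟩ = i := by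
          funext s
          by_cases hs : s = t
          · subst hs
            apply Fin.ext
            simp only [Function.update_self, hgval]
            omega
          · rw [Function.update_of_ne hs, gvs i s hs]
        have hk := key (g i) t hlt e (by simp [he, hgpar])
        rw [hiback] at hk
        linarith
    · intro i _ hne
      have hval := congrArg Fin.val (congrFun hne t)
      rw [gvt i] at hval
      split_ifs at hval <;> omega
    · intro i
      funext s
      by_cases hs : s = t
      · rw [hs]
        apply Fin.ext
        rw [gvt (g i), gvt i]
        split_ifs <;> omega
      · rw [gvs (g i) s hs, gvs i s hs]
  -- the odd-index sums over interior voxels vanish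
  have odd_sum : ∀ t : Fin n,
      ∑ i ∈ Finset.univ.filter
          (fun i : Fin n → Fin m => ¬((i t).1 = 0 ∨ (i t).1 + 1 = m)),
        c i ⟨2 * t.1 + 1, by have := t.isLt; omega⟩ = 0 := by
    intro t
    set e : Fin (2 * n) := ⟨2 * t.1 + 1, by have := t.isLt; omega⟩ with he
    have flipmem : ∀ i : Fin n → Fin m,
        (if (i t).1 % 2 = 1 then (i t).1 + 1 else (i t).1 - 1) % m < m :=
      fun _ => Nat.mod_lt _ hm
    set g : (Fin n → Fin m) → (Fin n → Fin m) := fun i =>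
      Function.update i t ⟨_, flipmem i⟩ with hg
    have gvt : ∀ i, ((g i) t).1
        = (if (i t).1 % 2 = 1 then (i t).1 + 1 else (i t).1 - 1) % m := by
      intro i; simp [hg]
    have gvs : ∀ i s, s ≠ t → g i s = i s := by
      intro i s hs; simp [hg, Function.update_of_ne hs]
    -- on interior voxels the mod-m is the identity
    have gvt' : ∀ i : Fin n → Fin m, (i t).1 ≠ 0 → (i t).1 + 1 ≠ m →
        ((g i) t).1 = if (i t).1 % 2 = 1 then (i t).1 + 1 else (i t).1 - 1 := by
      intro i h0 h1'
      rw [gvt i]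
      have := (i t).isLt
      apply Nat.mod_eq_of_lt
      by_cases hpar : (i t).1 % 2 = 1 <;> simp [hpar] <;> omega
    refine Finset.sum_involution (fun i _ => g i) ?_ ?_ ?_ ?_
    · intro i hi
      rw [Finset.mem_filter] at hi
      push_neg at hi
      obtain ⟨-, h0, hmm⟩ := hi
      by_cases hpar : (i t).1 % 2 = 1
      · have hlt : (i t).1 + 1 < m := by have := (i t).isLt; omega
        have hk := key i t hlt e (by simp [he, hpar])
        have hgi : Function.update i t ⟨(i t).1 + 1, hlt⟩ = g i := by
          funext s
          by_cases hs : s = t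
          · subst hs
            apply Fin.ext
            simp only [Function.update_self]
            rw [gvt' i h0 hmm, if_pos hpar]
          · rw [gvs i s hs, Function.update_of_ne hs]
        rw [hgi] at hk
        exact hk
      · have hgval : ((g i) t).1 = (i t).1 - 1 := by
          rw [gvt' i h0 hmm, if_neg hpar]
        have hlt : ((g i) t).1 + 1 < m := by
          rw [hgval]; have := (i t).isLt; omega
        have hgpar : ((g i) t).1 % 2 = 1 := by rw [hgval]; omega
        have hiback : Function.update (g i) t ⟨((g i) t).1 + 1, hlt⟩ = i := by
          funext s
          by_cases hs : s = t
          · subst hs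
            apply Fin.ext
            simp only [Function.update_self, hgval]
            omega
          · rw [Function.update_of_ne hs, gvs i s hs]
        have hk := key (g i) t hlt e (by simp [he, hgpar])
        rw [hiback] at hk
        linarith
    · intro i hi _
      rw [Finset.mem_filter] at hi
      push_neg at hi
      obtain ⟨-, h0, hmm⟩ := hi
      intro hne
      have hval := congrArg Fin.val (congrFun hne t)
      rw [gvt' i h0 hmm] at hval
      split_ifs at hval <;> omega
    · intro i hi
      rw [Finset.mem_filter] at hi
      push_neg at hi
      obtain ⟨-, h0, hmm⟩ := hi
      have hgt := gvt' i h0 hmm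
      rw [Finset.mem_filter]
      refine ⟨Finset.mem_univ _, ?_⟩
      push_neg
      have hiv := (i t).isLt
      by_cases hpar : (i t).1 % 2 = 1
      · rw [if_pos hpar] at hgt
        exact ⟨by omega, by rw [hgt]; omega⟩
      · rw [if_neg hpar] at hgt
        exact ⟨by rw [hgt]; omega, by rw [hgt]; omega⟩
    · intro i hi
      rw [Finset.mem_filter] at hi
      push_neg at hi
      obtain ⟨-, h0, hmm⟩ := hi
      have hgt := gvt' i h0 hmm
      show g (g i) = i
      funext s
      by_cases hs : s = t
      · rw [hs]
        apply Fin.ext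
        have hiv := (i t).isLt
        by_cases hpar : (i t).1 % 2 = 1
        · rw [if_pos hpar] at hgt
          have hg0 : ((g i) t).1 ≠ 0 := by omega
          have hgm : ((g i) t).1 + 1 ≠ m := by omega
          rw [gvt' (g i) hg0 hgm, hgt, if_neg (by omega)]
          omega
        · rw [if_neg hpar] at hgt
          have hg0 : ((g i) t).1 ≠ 0 := by omega
          have hgm : ((g i) t).1 + 1 ≠ m := by omega
          rw [gvt' (g i) hg0 hgm, hgt, if_pos (by omega)]
          omega
      · rw [gvs (g i) s hs, gvs i s hs]
  -- assemble
  have lhs_eq : ∀ i : Fin n → Fin m,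
      ∑ k : Fin (2 * n), c i k
        = ∑ t : Fin n, (c i ⟨2 * t.1, by have := t.isLt; omega⟩
            + c i ⟨2 * t.1 + 1, by have := t.isLt; omega⟩) :=
    fun i => fin_sum_pairs n (c i)
  calc ∑ i : Fin n → Fin m, ∑ k : Fin (2*n), c i k
      = ∑ i : Fin n → Fin m, ∑ t : Fin n,
          (c i ⟨2 * t.1, by have := t.isLt; omega⟩
            + c i ⟨2 * t.1 + 1, by have := t.isLt; omega⟩) :=
        Finset.sum_congr rfl fun i _ => lhs_eq i
    _ = ∑ t : Fin n, ∑ i : Fin n → Fin m,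
          (c i ⟨2 * t.1, by have := t.isLt; omega⟩
            + c i ⟨2 * t.1 + 1, by have := t.isLt; omega⟩) := Finset.sum_comm
    _ = ∑ t : Fin n, ∑ i : Fin n → Fin m,
          c i ⟨2 * t.1 + 1, by have := t.isLt; omega⟩ := by
        refine Finset.sum_congr rfl fun t _ => ?_
        rw [Finset.sum_add_distrib, even_sum t, zero_add]
    _ = ∑ t : Fin n, ∑ i ∈ Finset.univ.filter
          (fun i : Fin n → Fin m => (i t).1 = 0 ∨ (i t).1 + 1 = m),
          c i ⟨2 * t.1 + 1, by have := t.isLt; omega⟩ := by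
        refine Finset.sum_congr rfl fun t _ => ?_
        rw [← Finset.sum_filter_add_sum_filter_not Finset.univ
          (fun i : Fin n → Fin m => (i t).1 = 0 ∨ (i t).1 + 1 = m)
          (fun i => c i ⟨2 * t.1 + 1, by have := t.isLt; omega⟩), odd_sum t,
          add_zero]
    _ = ∑ t : Fin n, ∑ i : Fin n → Fin m,
          (if (i t).1 + 1 = 1 ∨ (i t).1 + 1 = m then
            c i ⟨2 * t.1 + 1, by have := t.isLt; omega⟩ else 0) := by
        refine Finset.sum_congr rfl fun t _ => ?_
        rw [Finset.sum_filter]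
        refine Finset.sum_congr rfl fun i _ => ?_
        congr 1
        simp only [eq_iff_iff]
        omega
    _ = ∑ i : Fin n → Fin m, ∑ t : Fin n,
          (if (i t).1 + 1 = 1 ∨ (i t).1 + 1 = m then
            c i ⟨2 * t.1 + 1, by have := t.isLt; omega⟩ else 0) := Finset.sum_comm
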